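/- arXiv:2004.04291 — 2 statements merged into one kernel-verified Lean document; each statement's English description precedes it below -/
import Mathlib

section
/- Let p and q be distinct primes with p ≡ 1 (mod q), and let t be an element of multiplicative order q in (ℤ/p²)ˣ. On the set B = ℤ/p² × ℤ/q with componentwise addition +, define (n,m) ∘ (s,r) = (n + tᵐ·s, m + r). Then (B,∘) is a group isomorphic to the semidirect product ℤ/p² ⋊ ℤ/q in which the generator 1 of ℤ/q acts by multiplication by t, the kernel of λ has order p², and both (B,+,∘) and (B,∘,+) are skew left braces (i.e., (B,+,∘) is a bi-skew brace). Moreover, up to brace isomorphism (B,+,∘) is the unique left brace with additive group cyclic of order p²q whose kernel of λ has order p². -/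
/-!
For the uniqueness, transport the brace to `ℤ/p² × ℤ/q` by the Chinese remainder theorem. As `p²`
and `q` are coprime, every `λ_a` is diagonal, `λ_a (s, r) = (u a * s, w a * r)`, where `u` and `w`
are homomorphisms out of `(B, ∘)`. Since `q < p`, the order `p²q` of `(B, ∘)` is prime to
`q - 1 = |(ℤ/q)ˣ|`, so `w` is trivial and `ker λ = ker u`. Having order `p²`, this kernel is the
`p²`-torsion `ℤ/p² × 0`, so `u` factors through an additive character of `ℤ/q`: `u (n, m) = sᵐ`
with `s ^ q = 1 ≠ s`. The `q`-th roots of unity of the cyclic group `(ℤ/p²)ˣ` are the powers of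
`t`, so `s = tᵏ` with `q ∤ k`, and `(n, m) ↦ (n, k m)` is the required isomorphism.
-/

def IsLeftBrace {B : Type*} [AddCommGroup B] (f : B → B → B) : Prop :=
  (∀ a b c, f (f a b) c = f a (f b c)) ∧
  (∀ a, f 0 a = a) ∧
  (∀ a, f a 0 = a) ∧
  (∀ a, ∃ a', f a' a = 0) ∧
  (∀ a b c, f a (b + c) = f a b - a + f a c)

/-- The kernel of `λ`: the set of `a` with `λ_a = id`, i.e. `a ∘ b = a + b` for all `b`. -/
def kerLambda {B : Type*} [AddCommGroup B] (f : B → B → B) : Set B :=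
  {a | ∀ b, f a b = a + b}

def circ7 (p q : ℕ) (t : (ZMod (p ^ 2))ˣ) :
    ZMod (p ^ 2) × ZMod q → ZMod (p ^ 2) × ZMod q → ZMod (p ^ 2) × ZMod q :=
  fun x y => (x.1 + (t : ZMod (p ^ 2)) ^ (x.2).val * y.1, x.2 + y.2)

lemma pow_mod_of_pow_eq_one {M : Type*} [Monoid M] {q : ℕ} {x : M} (hx : x ^ q = 1) (n : ℕ) :
    x ^ (n % q) = x ^ n := by
  conv_rhs => rw [← Nat.mod_add_div n q, pow_add, pow_mul, hx, one_pow, mul_one]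

lemma pow_val_add_of_pow_eq_one {M : Type*} [Monoid M] {q : ℕ} [NeZero q] {x : M}
    (hx : x ^ q = 1) (m r : ZMod q) : x ^ (m + r).val = x ^ m.val * x ^ r.val := by
  rw [← pow_add, ZMod.val_add, pow_mod_of_pow_eq_one hx]

lemma pow_val_natCast_of_pow_eq_one {M : Type*} [Monoid M] {q : ℕ} {x : M}
    (hx : x ^ q = 1) (n : ℕ) : x ^ (n : ZMod q).val = x ^ n := by
  rw [ZMod.val_natCast, pow_mod_of_pow_eq_one hx]

lemma IsCyclic.mem_zpowers_of_pow_orderOf_eq_one {G : Type*} [CommGroup G] [Finite G]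
    [IsCyclic G] {t x : G} (hx : x ^ orderOf t = 1) : x ∈ Subgroup.zpowers t := by
  have hle : Subgroup.zpowers t ≤ (powMonoidHom (orderOf t) : G →* G).ker :=
    Subgroup.zpowers_le.mpr (pow_orderOf_eq_one t)
  have heq := Subgroup.eq_of_le_of_card_ge hle (by
    rw [IsCyclic.card_powMonoidHom_ker, Nat.card_zpowers,
      Nat.gcd_eq_right (orderOf_dvd_natCard t)])
  exact heq ▸ hx

namespace ZMod

lemma eq_zero_of_nsmul_eq_zero {m n : ℕ} (hmn : m.Coprime n) {x : ZMod n} (h : m • x = 0) :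
    x = 0 := by
  rwa [nsmul_eq_mul, ((ZMod.isUnit_iff_coprime m n).mpr hmn).mul_right_eq_zero] at h

lemma addMonoidHom_eq_zero_of_coprime {m n : ℕ} (hmn : m.Coprime n) (f : ZMod m →+ ZMod n) :
    f = 0 := by
  ext x
  refine eq_zero_of_nsmul_eq_zero hmn ?_
  rw [← map_nsmul, nsmul_eq_mul, ZMod.natCast_self, zero_mul, map_zero]

lemma addMonoidHom_apply {n : ℕ} [NeZero n] (f : ZMod n →+ ZMod n) (x : ZMod n) :
    f x = f 1 * x := by
  conv_lhs => rw [← ZMod.natCast_zmod_val x, ← nsmul_one, map_nsmul, nsmul_eq_mul,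
    ZMod.natCast_val, ZMod.cast_id', id, mul_comm]

lemma addMonoidHom_prod_apply {m n : ℕ} [NeZero m] [NeZero n] (hmn : m.Coprime n)
    (φ : ZMod m × ZMod n →+ ZMod m × ZMod n) (b : ZMod m × ZMod n) :
    φ b = ((φ (1, 0)).1 * b.1, (φ (0, 1)).2 * b.2) := by
  have h₁₂ := addMonoidHom_eq_zero_of_coprime hmn
    ((AddMonoidHom.snd _ _).comp (φ.comp (AddMonoidHom.inl _ _)))
  have h₂₁ := addMonoidHom_eq_zero_of_coprime hmn.symm
    ((AddMonoidHom.fst _ _).comp (φ.comp (AddMonoidHom.inr _ _)))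
  have h₁₁ := addMonoidHom_apply ((AddMonoidHom.fst _ _).comp (φ.comp (AddMonoidHom.inl _ _)))
  have h₂₂ := addMonoidHom_apply ((AddMonoidHom.snd _ _).comp (φ.comp (AddMonoidHom.inr _ _)))
  have hb : b = AddMonoidHom.inl _ _ b.1 + AddMonoidHom.inr _ _ b.2 := by simp
  conv_lhs => rw [hb, map_add]
  ext
  · simpa using congr($(h₁₁ b.1) + $(DFunLike.congr_fun h₂₁ b.2))
  · simpa using congr($(DFunLike.congr_fun h₁₂ b.1) + $(h₂₂ b.2))

end ZMod

def Circ {A : Type*} (_f : A → A → A) : Type _ := A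

namespace IsLeftBrace

variable {A : Type*} [AddCommGroup A] {f : A → A → A}

lemma left_cancel (hf : IsLeftBrace f) {a b c : A} (h : f a b = f a c) : b = c := by
  obtain ⟨a', ha'⟩ := hf.2.2.2.1 a
  simpa only [← hf.1, ha', hf.2.1] using congrArg (f a') h

def lam (hf : IsLeftBrace f) (a : A) : A →+ A :=
  AddMonoidHom.mk' (fun b => f a b - a) fun b c => by rw [hf.2.2.2.2]; abel

lemma lam_apply (hf : IsLeftBrace f) (a b : A) : hf.lam a b = f a b - a := rfl

lemma lam_zero_apply (hf : IsLeftBrace f) (b : A) : hf.lam 0 b = b := by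
  rw [lam_apply, hf.2.1, sub_zero]

lemma lam_lam (hf : IsLeftBrace f) (a b c : A) : hf.lam a (hf.lam b c) = hf.lam (f a b) c := by
  have h : f a (f b c - b) = f a (f b c) - f a b + a := by
    rw [← sub_add_cancel (f b c) b, hf.2.2.2.2, add_sub_cancel_right]; abel
  rw [lam_apply, lam_apply, lam_apply, h, hf.1]; abel

lemma isUnit_of_map_mul (hf : IsLeftBrace f) {M : Type*} [CommMonoid M] {φ : A → M}
    (hφ : ∀ a b, φ (f a b) = φ a * φ b) (h0 : φ 0 = 1) (a : A) : IsUnit (φ a) := by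
  obtain ⟨a', ha'⟩ := hf.2.2.2.1 a
  exact .of_mul_eq_one (φ a') (by rw [mul_comm, ← hφ, ha', h0])

noncomputable abbrev circGroup (hf : IsLeftBrace f) : Group (Circ f) :=
  letI : Mul (Circ f) := ⟨f⟩
  letI : One (Circ f) := ⟨(0 : A)⟩
  letI : Inv (Circ f) := ⟨fun a => (hf.2.2.2.1 a).choose⟩
  Group.ofLeftAxioms hf.1 hf.2.1 fun a => (hf.2.2.2.1 a).choose_spec

lemma pow_natCard_eq_one (hf : IsLeftBrace f) [Finite A] {M : Type*} [Monoid M] {φ : A → M}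
    (hφ : ∀ a b, φ (f a b) = φ a * φ b) (h0 : φ 0 = 1) (a : A) : φ a ^ Nat.card A = 1 := by
  let _ := hf.circGroup
  have : Finite (Circ f) := ‹Finite A›
  let Φ : Circ f →* M := { toFun := φ, map_one' := h0, map_mul' := hφ }
  calc φ a ^ Nat.card A = Φ ((show Circ f from a) ^ Nat.card (Circ f)) := (map_pow Φ _ _).symm
    _ = 1 := by rw [pow_card_eq_one', map_one]

def kerLambdaAddSubgroup (hf : IsLeftBrace f) : AddSubgroup A where
  carrier := kerLambda f
  add_mem' {a b} ha hb c := by rw [add_assoc, ← ha (b + c), ← hb c, ← hf.1, ha b]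
  zero_mem' b := by rw [hf.2.1, zero_add]
  neg_mem' {a} ha b := hf.left_cancel (a := a) <| by
    rw [← hf.1, ha (-a), add_neg_cancel, hf.2.1, ha (-a + b), add_neg_cancel_left]

lemma transfer {B : Type*} [AddCommGroup B] {g : B → B → B} (hg : IsLeftBrace g) (e : B ≃+ A) :
    IsLeftBrace fun x y => e (g (e.symm x) (e.symm y)) := by
  refine ⟨fun a b c => ?_, fun a => ?_, fun a => ?_, fun a => ?_, fun a b c => ?_⟩
  · simp only [AddEquiv.symm_apply_apply, hg.1]
  · simp only [map_zero, hg.2.1, AddEquiv.apply_symm_apply]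
  · simp only [map_zero, hg.2.2.1, AddEquiv.apply_symm_apply]
  · obtain ⟨a', ha'⟩ := hg.2.2.2.1 (e.symm a)
    exact ⟨e a', by simp only [AddEquiv.symm_apply_apply, ha', map_zero]⟩
  · simp only [map_add, hg.2.2.2.2, map_sub, AddEquiv.apply_symm_apply]

end IsLeftBrace

lemma kerLambda_transfer {A B : Type*} [AddCommGroup A] [AddCommGroup B] (g : B → B → B)
    (e : B ≃+ A) : kerLambda (fun x y => e (g (e.symm x) (e.symm y))) = e.symm ⁻¹' kerLambda g := by
  ext a
  refine ⟨fun h b => e.injective ?_, fun h b => ?_⟩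
  · simpa using h (e b)
  · simp only [h (e.symm b), map_add, AddEquiv.apply_symm_apply]

namespace IsLeftBrace

variable {m n : ℕ} {g : ZMod m × ZMod n → ZMod m × ZMod n → ZMod m × ZMod n} (hg : IsLeftBrace g)
include hg

def lamFst (a : ZMod m × ZMod n) : ZMod m := (hg.lam a (1, 0)).1

def lamSnd (a : ZMod m × ZMod n) : ZMod n := (hg.lam a (0, 1)).2

lemma lamFst_zero : hg.lamFst 0 = 1 := by simp [lamFst, lam_zero_apply]

lemma lamSnd_zero : hg.lamSnd 0 = 1 := by simp [lamSnd, lam_zero_apply]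

lemma kerLambda_eq_range_inl [NeZero m] (hmn : m.Coprime n) (hker : Nat.card (kerLambda g) = m) :
    kerLambda g = Set.range (AddMonoidHom.inl (ZMod m) (ZMod n)) := by
  have hsub : kerLambda g ⊆ Set.range (AddMonoidHom.inl (ZMod m) (ZMod n)) := by
    intro a ha
    have hma : m • a = 0 := by
      have h := card_nsmul_eq_zero' (G := hg.kerLambdaAddSubgroup) (x := ⟨a, ha⟩)
      rw [show Nat.card hg.kerLambdaAddSubgroup = m from hker] at h
      exact congrArg Subtype.val h
    exact ⟨a.1, Prod.ext rfl (ZMod.eq_zero_of_nsmul_eq_zero hmn (congrArg Prod.snd hma)).symm⟩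
  refine Set.eq_of_subset_of_ncard_le hsub ?_ (Set.toFinite _)
  rw [← Nat.card_coe_set_eq, ← Nat.card_coe_set_eq, hker,
    Nat.card_range_of_injective fun x y h => congrArg Prod.fst h, Nat.card_zmod]

variable [NeZero m] [NeZero n] (hmn : m.Coprime n)
include hmn

lemma lam_apply_eq (a b : ZMod m × ZMod n) :
    hg.lam a b = (hg.lamFst a * b.1, hg.lamSnd a * b.2) :=
  ZMod.addMonoidHom_prod_apply hmn _ b

lemma apply_eq (a b : ZMod m × ZMod n) :
    g a b = (a.1 + hg.lamFst a * b.1, a.2 + hg.lamSnd a * b.2) := by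
  rw [← Prod.mk_add_mk, ← hg.lam_apply_eq hmn, lam_apply, add_sub_cancel]

lemma lamFst_mul (a b : ZMod m × ZMod n) : hg.lamFst (g a b) = hg.lamFst a * hg.lamFst b := by
  change (hg.lam (g a b) (1, 0)).1 = _
  rw [← lam_lam, hg.lam_apply_eq hmn b (1, 0), hg.lam_apply_eq hmn a]
  simp

lemma lamSnd_mul (a b : ZMod m × ZMod n) : hg.lamSnd (g a b) = hg.lamSnd a * hg.lamSnd b := by
  change (hg.lam (g a b) (0, 1)).2 = _
  rw [← lam_lam, hg.lam_apply_eq hmn b (0, 1), hg.lam_apply_eq hmn a]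
  simp

lemma lamSnd_eq_one (hn : n.Prime) (hm : m.Coprime (n - 1)) (a : ZMod m × ZMod n) :
    hg.lamSnd a = 1 := by
  have : Fact n.Prime := ⟨hn⟩
  have hcard : (hg.lamSnd a) ^ (m * n) = 1 := by
    simpa [Nat.card_prod, Nat.card_zmod] using
      hg.pow_natCard_eq_one (hg.lamSnd_mul hmn) hg.lamSnd_zero a
  have hfermat : (hg.lamSnd a) ^ (n - 1) = 1 :=
    ZMod.pow_card_sub_one_eq_one (hg.isUnit_of_map_mul (hg.lamSnd_mul hmn) hg.lamSnd_zero a).ne_zero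
  have hcop : (m * n).Coprime (n - 1) :=
    hm.mul_left ((Nat.coprime_self_sub_right hn.one_lt.le).mpr (Nat.coprime_one_right n))
  exact (pow_eq_one_iff_of_coprime hcop).mp ⟨hcard, hfermat⟩

section

variable (hw : ∀ a, hg.lamSnd a = 1)
include hw

lemma apply_eq_of_lamSnd_eq_one (a b : ZMod m × ZMod n) :
    g a b = (a.1 + hg.lamFst a * b.1, a.2 + b.2) := by
  rw [hg.apply_eq hmn, hw, one_mul]

lemma mem_kerLambda_iff_lamFst_eq_one (a : ZMod m × ZMod n) :
    a ∈ kerLambda g ↔ hg.lamFst a = 1 := by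
  refine ⟨fun ha => ?_, fun ha b => ?_⟩
  · simpa using congrArg Prod.fst ((hg.apply_eq_of_lamSnd_eq_one hmn hw a (1, 0)).symm.trans (ha _))
  · rw [hg.apply_eq_of_lamSnd_eq_one hmn hw, ha, one_mul, Prod.mk_add_mk]

lemma exists_addChar_lamFst (hker : kerLambda g = Set.range (AddMonoidHom.inl (ZMod m) (ZMod n))) :
    ∃ χ : AddChar (ZMod n) (ZMod m), ∀ a, hg.lamFst a = χ a.2 := by
  have hfst : ∀ a : ZMod m × ZMod n, hg.lamFst a = hg.lamFst (0, a.2) := by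
    intro a
    have hker1 : hg.lamFst (a.1, 0) = 1 :=
      (hg.mem_kerLambda_iff_lamFst_eq_one hmn hw _).mp (hker ▸ ⟨a.1, rfl⟩)
    have hsplit : g (a.1, 0) (0, a.2) = a := by
      rw [hg.apply_eq_of_lamSnd_eq_one hmn hw]; simp
    rw [← hsplit, hg.lamFst_mul hmn, hker1, one_mul, hsplit]
  refine ⟨⟨fun r => hg.lamFst (0, r), hg.lamFst_zero, fun r s => ?_⟩, hfst⟩
  rw [← hg.lamFst_mul hmn, hfst, hg.apply_eq_of_lamSnd_eq_one hmn hw]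
  simp

end

end IsLeftBrace

section Circ7

variable {p q : ℕ} [NeZero q] {t : (ZMod (p ^ 2))ˣ}

lemma isLeftBrace_circ7 (ht : t ^ q = 1) : IsLeftBrace (circ7 p q t) := by
  have ht' : (t : ZMod (p ^ 2)) ^ q = 1 := by rw [← Units.val_pow_eq_pow_val, ht, Units.val_one]
  refine ⟨fun a b c => ?_, fun a => ?_, fun a => ?_, fun a => ⟨(-(t ^ (-a.2).val * a.1), -a.2), ?_⟩,
    fun a b c => ?_⟩ <;>
    simp only [circ7, Prod.ext_iff, Prod.fst_zero, Prod.snd_zero, Prod.fst_add, Prod.snd_add,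
      Prod.fst_sub, Prod.snd_sub, ZMod.val_zero, pow_zero, pow_val_add_of_pow_eq_one ht']
  · constructor <;> ring
  · simp
  · simp
  · simp
  · constructor <;> ring

lemma add_circ7_eq_circ7_circ7 (ht : t ^ q = 1) (x x' : ZMod (p ^ 2) × ZMod q)
    (hx : circ7 p q t x' x = 0) (y z : ZMod (p ^ 2) × ZMod q) :
    x + circ7 p q t y z = circ7 p q t (circ7 p q t (x + y) x') (x + z) := by
  have ht' : (t : ZMod (p ^ 2)) ^ q = 1 := by rw [← Units.val_pow_eq_pow_val, ht, Units.val_one]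
  simp only [circ7, Prod.ext_iff, Prod.fst_zero, Prod.snd_zero] at hx
  obtain ⟨hx1, hx2⟩ := hx
  have hx2' : x'.2 = -x.2 := eq_neg_of_add_eq_zero_left hx2
  have hinv : (t : ZMod (p ^ 2)) ^ x.2.val * (t : ZMod (p ^ 2)) ^ (-x.2).val = 1 := by
    rw [← pow_val_add_of_pow_eq_one ht', add_neg_cancel, ZMod.val_zero, pow_zero]
  rw [hx2'] at hx1
  simp only [circ7, Prod.ext_iff, Prod.fst_add, Prod.snd_add, hx2', pow_val_add_of_pow_eq_one ht']
  constructor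
  · linear_combination (-(t : ZMod (p ^ 2)) ^ x.2.val * (t : ZMod (p ^ 2)) ^ y.2.val) * hx1
      - ((t : ZMod (p ^ 2)) ^ y.2.val * z.1) * hinv
  · ring

lemma kerLambda_circ7 (ht : orderOf t = q) :
    kerLambda (circ7 p q t) = Set.range (AddMonoidHom.inl (ZMod (p ^ 2)) (ZMod q)) := by
  ext a
  have ht' : orderOf (t : ZMod (p ^ 2)) = q := orderOf_units.trans ht
  simp only [kerLambda, circ7, Set.mem_ofPred_eq, Set.mem_range, AddMonoidHom.inl_apply,
    Prod.ext_iff, Prod.fst_add, Prod.snd_add, add_right_inj]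
  constructor
  · intro h
    have hpow : (t : ZMod (p ^ 2)) ^ a.2.val = 1 := by simpa using (h (1, 0)).1
    have hdvd := orderOf_dvd_of_pow_eq_one hpow
    rw [ht'] at hdvd
    exact ⟨a.1, rfl, ((ZMod.val_eq_zero _).mp (Nat.eq_zero_of_dvd_of_lt hdvd (ZMod.val_lt _))).symm⟩
  · rintro ⟨n, rfl, h⟩ b
    simp [← h]

end Circ7

lemma exists_addEquiv_circ7_pow {p q : ℕ} [NeZero q] {t : (ZMod (p ^ 2))ˣ} (ht : t ^ q = 1)
    {k : ℕ} (hk : k.Coprime q) :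
    ∃ e : (ZMod (p ^ 2) × ZMod q) ≃+ (ZMod (p ^ 2) × ZMod q),
      ∀ a b, e (circ7 p q (t ^ k) a b) = circ7 p q t (e a) (e b) := by
  have ht' : (t : ZMod (p ^ 2)) ^ q = 1 := by rw [← Units.val_pow_eq_pow_val, ht, Units.val_one]
  refine ⟨(AddEquiv.refl _).prodCongr (DistribMulAction.toAddEquiv _ (ZMod.unitOfCoprime k hk)),
    fun a b => Prod.ext ?_ ?_⟩
  · show a.1 + ((t ^ k : (ZMod (p ^ 2))ˣ) : ZMod (p ^ 2)) ^ a.2.val * b.1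
      = a.1 + (t : ZMod (p ^ 2)) ^ ((k : ZMod q) * a.2).val * b.1
    rw [show (k : ZMod q) * a.2 = ((k * a.2.val : ℕ) : ZMod q) by
      rw [Nat.cast_mul, ZMod.natCast_zmod_val], pow_val_natCast_of_pow_eq_one ht',
      Units.val_pow_eq_pow_val, ← pow_mul]
  · show (k : ZMod q) * (a.2 + b.2) = k * a.2 + k * b.2
    ring

section Classification

variable {p q : ℕ} {g : ZMod (p ^ 2) × ZMod q → ZMod (p ^ 2) × ZMod q → ZMod (p ^ 2) × ZMod q}

theorem IsLeftBrace.exists_eq_circ7 (hp : p.Prime) (hq : q.Prime) (hqp : q < p)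
    (hg : IsLeftBrace g) (hker : Nat.card (kerLambda g) = p ^ 2) :
    ∃ S : (ZMod (p ^ 2))ˣ, S ^ q = 1 ∧ S ≠ 1 ∧ g = circ7 p q S := by
  have : NeZero p := ⟨hp.ne_zero⟩
  have : Fact q.Prime := ⟨hq⟩
  have hmn : (p ^ 2).Coprime q := ((Nat.coprime_primes hp hq).mpr hqp.ne').pow_left 2
  have hm : (p ^ 2).Coprime (q - 1) := by
    refine (hp.coprime_iff_not_dvd.mpr fun h => ?_).pow_left 2
    have hle := Nat.le_of_dvd (by have := hq.two_le; omega) h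
    omega
  have hw := hg.lamSnd_eq_one hmn hq hm
  have hker' := hg.kerLambda_eq_range_inl hmn hker
  obtain ⟨χ, hχ⟩ := hg.exists_addChar_lamFst hmn hw hker'
  have hpow (a : ZMod (p ^ 2) × ZMod q) : hg.lamFst a = χ 1 ^ a.2.val := by
    rw [hχ, ← AddChar.map_nsmul_eq_pow, nsmul_one, ZMod.natCast_zmod_val]
  have hunit : IsUnit (χ 1) := hχ (0, 1) ▸ hg.isUnit_of_map_mul (hg.lamFst_mul hmn) hg.lamFst_zero _
  refine ⟨hunit.unit, Units.ext ?_, fun hS => ?_, ?_⟩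
  · rw [Units.val_pow_eq_pow_val, IsUnit.unit_spec, ← AddChar.map_nsmul_eq_pow, nsmul_one,
      ZMod.natCast_self, AddChar.map_zero_eq_one, Units.val_one]
  · have hmem : ((0, 1) : ZMod (p ^ 2) × ZMod q) ∈ kerLambda g := by
      rw [hg.mem_kerLambda_iff_lamFst_eq_one hmn hw, hχ, ← hunit.unit_spec, hS, Units.val_one]
    rw [hker'] at hmem
    obtain ⟨x, hx⟩ := hmem
    exact one_ne_zero (congrArg Prod.snd hx).symm
  · funext a b
    rw [hg.apply_eq_of_lamSnd_eq_one hmn hw, hpow]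
    rfl

theorem IsLeftBrace.exists_addEquiv_circ7 (hp : p.Prime) (hq : q.Prime) (hqp : q < p)
    {t : (ZMod (p ^ 2))ˣ} (ht : orderOf t = q) (hg : IsLeftBrace g)
    (hker : Nat.card (kerLambda g) = p ^ 2) :
    ∃ e : (ZMod (p ^ 2) × ZMod q) ≃+ (ZMod (p ^ 2) × ZMod q),
      ∀ a b, e (g a b) = circ7 p q t (e a) (e b) := by
  have : NeZero q := ⟨hq.ne_zero⟩
  have : IsCyclic (ZMod (p ^ 2))ˣ :=
    ZMod.isCyclic_units_of_prime_pow p hp (by have := hq.two_le; omega) 2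
  obtain ⟨S, hSq, hS1, rfl⟩ := hg.exists_eq_circ7 hp hq hqp hker
  obtain ⟨k, rfl⟩ := (Submonoid.mem_powers_iff _ _).mp <| mem_powers_iff_mem_zpowers.mpr <|
    IsCyclic.mem_zpowers_of_pow_orderOf_eq_one (ht ▸ hSq)
  have hk : k.Coprime q := Nat.Coprime.symm <| hq.coprime_iff_not_dvd.mpr fun h =>
    hS1 (orderOf_dvd_iff_pow_eq_one.mp (ht ▸ h))
  exact exists_addEquiv_circ7_pow (ht ▸ pow_orderOf_eq_one t) hk

end Classification

theorem stmt_7_general (p q : ℕ) (hp : p.Prime) (hq : q.Prime)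
    (hmod : p ≡ 1 [MOD q]) (t : (ZMod (p ^ 2))ˣ) (ht : orderOf t = q) :
    IsLeftBrace (circ7 p q t) ∧
    (∀ x x' : ZMod (p ^ 2) × ZMod q, circ7 p q t x' x = 0 →
      ∀ y z, x + circ7 p q t y z = circ7 p q t (circ7 p q t (x + y) x') (x + z)) ∧
    Nat.card ↥(kerLambda (circ7 p q t)) = p ^ 2 ∧
    (∃ e : ZMod (p ^ 2) × ZMod q ≃ ZMod (p ^ 2) × ZMod q,
      ∀ a b, e (circ7 p q t a b) =
        ((e a).1 + (t : ZMod (p ^ 2)) ^ ((e a).2).val * (e b).1, (e a).2 + (e b).2)) ∧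
    (∀ (B' : Type) (_ : AddCommGroup B') (g : B' → B' → B'),
      IsAddCyclic B' → Nat.card B' = p ^ 2 * q → IsLeftBrace g →
      Nat.card ↥(kerLambda g) = p ^ 2 →
      ∃ e : B' ≃ ZMod (p ^ 2) × ZMod q,
        (∀ a b, e (a + b) = e a + e b) ∧
        ∀ a b, e (g a b) = circ7 p q t (e a) (e b)) := by
  have : NeZero q := ⟨hq.ne_zero⟩
  have htq : t ^ q = 1 := ht ▸ pow_orderOf_eq_one t
  refine ⟨isLeftBrace_circ7 htq, add_circ7_eq_circ7_circ7 htq, ?_, ⟨Equiv.refl _, fun _ _ => rfl⟩,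
    fun B _ g hcyc hcard hg hker => ?_⟩
  · rw [kerLambda_circ7 ht, Nat.card_range_of_injective fun x y h => congrArg Prod.fst h,
      Nat.card_zmod]
  have hqp : q < p := (Nat.le_of_dvd (Nat.sub_pos_of_lt hp.one_lt)
    ((Nat.modEq_iff_dvd' hp.one_lt.le).mp hmod.symm)).trans_lt (Nat.sub_lt hp.pos one_pos)
  have hcop : (p ^ 2).Coprime q := Nat.Coprime.pow_left 2 (hmod.gcd_eq.trans (Nat.gcd_one_left q))
  let e : B ≃+ ZMod (p ^ 2) × ZMod q :=
    (hcard ▸ zmodAddCyclicAddEquiv hcyc).symm.trans (ZMod.chineseRemainder hcop).toAddEquiv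
  obtain ⟨ψ, hψ⟩ := (hg.transfer e).exists_addEquiv_circ7 hp hq hqp ht <| by
    rwa [kerLambda_transfer, Nat.card_preimage_of_injective e.symm.injective (by simp)]
  exact ⟨(e.trans ψ).toEquiv, map_add (e.trans ψ), fun a b => by simpa using hψ (e a) (e b)⟩

/-- Let `p, q` be distinct primes with `p ≡ 1 (mod q)` and let `t` be an element of
order `q` in `(ℤ/p²)ˣ`.  On `B = ℤ/p² × ℤ/q`, `(n,m) ∘ (s,r) = (n + tᵐ s, m + r)`
makes `(B,+,∘)` a left brace which is in fact a bi-skew brace, with `|ker λ| = p²`;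
`(B,∘)` is isomorphic to `ℤ/p² ⋊ ℤ/q` where the generator `1` of `ℤ/q` acts by
multiplication by `t`; and `(B,+,∘)` is, up to brace isomorphism, the unique left
brace with cyclic additive group of order `p²q` and `|ker λ| = p²`. -/
theorem stmt_7 (p q : ℕ) (hp : p.Prime) (hq : q.Prime) (hpq : p ≠ q)
    (hmod : p ≡ 1 [MOD q]) (t : (ZMod (p ^ 2))ˣ) (ht : orderOf t = q) :
    IsLeftBrace (circ7 p q t) ∧
    (∀ x x' : ZMod (p ^ 2) × ZMod q, circ7 p q t x' x = 0 →
      ∀ y z, x + circ7 p q t y z = circ7 p q t (circ7 p q t (x + y) x') (x + z)) ∧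
    Nat.card ↥(kerLambda (circ7 p q t)) = p ^ 2 ∧
    (∃ e : ZMod (p ^ 2) × ZMod q ≃ ZMod (p ^ 2) × ZMod q,
      ∀ a b, e (circ7 p q t a b) =
        ((e a).1 + (t : ZMod (p ^ 2)) ^ ((e a).2).val * (e b).1, (e a).2 + (e b).2)) ∧
    (∀ (B' : Type) (_ : AddCommGroup B') (g : B' → B' → B'),
      IsAddCyclic B' → Nat.card B' = p ^ 2 * q → IsLeftBrace g →
      Nat.card ↥(kerLambda g) = p ^ 2 →
      ∃ e : B' ≃ ZMod (p ^ 2) × ZMod q,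
        (∀ a b, e (a + b) = e a + e b) ∧
        ∀ a b, e (g a b) = circ7 p q t (e a) (e b)) :=
  stmt_7_general p q hp hq hmod t ht
end

section
/- Let p be an odd prime and q a prime with q ≡ 1 (mod p) and q ≢ 1 (mod p²), and let A be the cyclic group of order p²q. Then there is no regular subgroup G of Hol(A) such that the image π₂(G) has order p². -/
/-!
Suppose `G` is such a subgroup and, by regularity, pick `g = (1, f) ∈ G`. As `π₂(G)` has order
`p²`, `f ^ p² = 1`, and `f` is multiplication by a unit `u` of `ℤ/p²q`; since `p²` divides
neither `φ(p²) = p(p - 1)` nor `φ(q) = q - 1`, in fact `u ^ p = 1`. Hence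
`g ^ p = (1 + u + ⋯ + u ^ (p - 1), 1)` lies in `G ∩ A`, which has order `|G| / p² = q`, so
`q (1 + u + ⋯ + u ^ (p - 1)) = 0`. But `u ≡ 1 (mod p)` and `p` is odd, so the geometric sum is
`≡ p (mod p²)`, while `q p ≢ 0 (mod p²)`.
-/

/-- The holomorph `Hol(A) = A ⋊ Aut(A)` of a group `A`. -/
abbrev Hol (A : Type*) [Group A] :=
  SemidirectProduct A (MulAut A) (MonoidHom.id (MulAut A))

/-- The natural action of an element `(a, f)` of `Hol(A)` on `A`: `(a, f) · x = a * f x`. -/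
def holSmul {A : Type*} [Group A] (g : Hol A) (x : A) : A :=
  g.left * g.right x

/-- A subgroup `G ≤ Hol(A)` is regular if for all `x y : A` there is exactly one
`g ∈ G` with `g · x = y`. -/
def IsRegularSubgroup {A : Type*} [Group A] (G : Subgroup (Hol A)) : Prop :=
  ∀ x y : A, ∃! g : G, holSmul (g : Hol A) x = y

open Finset Multiplicative

namespace SemidirectProduct

variable {N G : Type*} [Group G]

theorem pow_right [Group N] {φ : G →* MulAut N} (g : N ⋊[φ] G) (k : ℕ) :
    (g ^ k).right = g.right ^ k :=
  map_pow rightHom g k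

theorem pow_left [CommGroup N] {φ : G →* MulAut N} (g : N ⋊[φ] G) (k : ℕ) :
    (g ^ k).left = ∏ i ∈ range k, φ (g.right ^ i) g.left := by
  induction k with
  | zero => rfl
  | succ k ih => rw [pow_succ, mul_left, ih, prod_range_succ, pow_right]

end SemidirectProduct

namespace ZMod

def mulAutEquivUnits (n : ℕ) : MulAut (Multiplicative (ZMod n)) ≃* (ZMod n)ˣ :=
  (MulAutMultiplicative (ZMod n)).trans (AddAutEquivUnits n).toMultiplicative

theorem toAdd_mulAut_apply {n : ℕ} (f : MulAut (Multiplicative (ZMod n)))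
    (x : Multiplicative (ZMod n)) : toAdd (f x) = mulAutEquivUnits n f * toAdd x := by
  conv_lhs => rw [← (mulAutEquivUnits n).symm_apply_apply f]
  rfl

theorem unitsMap_prod_injective {m n : ℕ} (h : m.Coprime n) :
    Function.Injective ((unitsMap (dvd_mul_right m n)).prod (unitsMap (dvd_mul_left n m))) := by
  intro u v huv
  simp only [MonoidHom.prod_apply, Prod.mk.injEq] at huv
  ext
  apply (chineseRemainder h).injective
  ext
  · simpa [chineseRemainder, Units.ext_iff, unitsMap_val] using huv.1
  · simpa [chineseRemainder, Units.ext_iff, unitsMap_val] using huv.2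

end ZMod

theorem pow_eq_one_of_pow_sq_eq_one {G : Type*} [Group G] {p : ℕ} (hp : p.Prime)
    (hG : ¬ p ^ 2 ∣ Nat.card G) {x : G} (hx : x ^ p ^ 2 = 1) : x ^ p = 1 := by
  obtain ⟨k, hk, hxk⟩ := (Nat.dvd_prime_pow hp).1 (orderOf_dvd_of_pow_eq_one hx)
  rw [← orderOf_dvd_iff_pow_eq_one, hxk]
  interval_cases k
  · exact one_dvd p
  · exact (pow_one p).dvd
  · exact absurd (hxk ▸ orderOf_dvd_natCard x) hG

theorem Subgroup.pow_card_div_card_map_eq_one {H K : Type*} [Group H] [Group K]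
    (G : Subgroup H) (φ : H →* K) {h : H} (hG : h ∈ G) (hφ : φ h = 1) :
    h ^ (Nat.card G / Nat.card (G.map φ)) = 1 := by
  set ψ := φ.domRestrict G
  have hker : (⟨h, hG⟩ : G) ∈ ψ.ker := hφ
  have hcard : Nat.card ψ.ker * Nat.card (G.map φ) = Nat.card G := by
    rw [← MonoidHom.domRestrict_range, ← Subgroup.index_ker, Subgroup.card_mul_index]
  rcases Nat.eq_zero_or_pos (Nat.card (G.map φ)) with h0 | hpos
  · rw [h0, Nat.div_zero, pow_zero]
  · rw [← Nat.eq_div_of_mul_eq_left hpos.ne' hcard]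
    have := pow_card_eq_one' (G := ψ.ker) (x := (⟨⟨h, hG⟩, hker⟩ : ψ.ker))
    simpa [Subtype.ext_iff] using this

theorem ZMod.geom_sum_eq_of_pow_eq_one {p : ℕ} [Fact p.Prime] (hp : Odd p) {v : ZMod (p ^ 2)}
    (hv : v ^ p = 1) : ∑ i ∈ range p, v ^ i = p := by
  have hdvd : p ∣ p ^ 2 := dvd_pow_self p two_ne_zero
  have hcast : (cast (v - 1) : ZMod p) = 0 := by
    rw [cast_sub hdvd, cast_one hdvd, sub_eq_zero, ← pow_card (cast v : ZMod p),
      ← cast_pow hdvd, hv, cast_one hdvd]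
  obtain ⟨b, hb⟩ := (natCast_eq_zero_iff (v - 1).val p).1 (by rwa [natCast_val])
  have hvb : v = 1 + p * b := by
    rw [← sub_eq_iff_eq_add', ← natCast_zmod_val (v - 1), hb, Nat.cast_mul]
  have hp2 : (p : ZMod (p ^ 2)) ^ 2 = 0 := by exact_mod_cast natCast_self (p ^ 2)
  have := odd_sq_dvd_geom_sum₂_sub (R := ZMod (p ^ 2)) 1 (b : ZMod (p ^ 2)) hp
  rw [hp2, zero_dvd_iff, sub_eq_zero] at this
  simpa [← hvb] using this

theorem ZMod.units_pow_eq_one_of_pow_sq_eq_one {p q : ℕ} (hp : p.Prime) (hq : q.Prime)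
    (hpq : p ≠ q) (hq1 : ¬ p ^ 2 ∣ q - 1) {u : (ZMod (p ^ 2 * q))ˣ} (hu : u ^ p ^ 2 = 1) :
    u ^ p = 1 := by
  have : Fact p.Prime := ⟨hp⟩
  have : Fact q.Prime := ⟨hq⟩
  have hco : (p ^ 2).Coprime q := ((Nat.coprime_primes hp hq).2 hpq).pow_left 2
  have hcard₁ : ¬ p ^ 2 ∣ Nat.card (ZMod (p ^ 2))ˣ := by
    rw [Nat.card_eq_fintype_card, card_units_eq_totient, Nat.totient_prime_pow hp two_pos]
    norm_num [pow_two, Nat.mul_dvd_mul_iff_left hp.pos, hp.one_lt]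
  have hcard₂ : ¬ p ^ 2 ∣ Nat.card (ZMod q)ˣ := by
    rwa [Nat.card_eq_fintype_card, card_units_eq_totient, Nat.totient_prime hq]
  refine (injective_iff_map_eq_one _).1 (unitsMap_prod_injective hco) _ ?_
  simp only [map_pow, MonoidHom.prod_apply, Prod.pow_mk, Prod.mk_eq_one]
  exact ⟨pow_eq_one_of_pow_sq_eq_one hp hcard₁ (by rw [← map_pow, hu, map_one]),
    pow_eq_one_of_pow_sq_eq_one hp hcard₂ (by rw [← map_pow, hu, map_one])⟩

theorem ZMod.dvd_of_geom_sum_mul_eq_zero {p q : ℕ} [Fact p.Prime] (hp : Odd p)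
    {u : ZMod (p ^ 2 * q)} (hu : u ^ p = 1)
    (h : (∑ i ∈ range p, u ^ i) * (q : ZMod (p ^ 2 * q)) = 0) : p ∣ q := by
  set π := castHom (dvd_mul_right (p ^ 2) q) (ZMod (p ^ 2))
  have hπu : π u ^ p = 1 := by rw [← map_pow, hu, map_one]
  have hpq : ((p * q : ℕ) : ZMod (p ^ 2)) = 0 := by
    have := congrArg π h
    rw [map_mul, map_sum, map_natCast, map_zero] at this
    simp only [map_pow, geom_sum_eq_of_pow_eq_one hp hπu] at this
    exact_mod_cast this
  rw [natCast_eq_zero_iff, pow_two] at hpq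
  exact Nat.dvd_of_mul_dvd_mul_left (Fact.out : p.Prime).pos hpq

namespace IsRegularSubgroup

variable {A : Type*} [Group A] {G : Subgroup (Hol A)}

theorem natCard_eq (hG : IsRegularSubgroup G) : Nat.card G = Nat.card A :=
  Nat.card_congr <| Equiv.ofBijective _ <|
    (Function.bijective_iff_existsUnique fun g : G => holSmul (g : Hol A) 1).2 (hG 1)

theorem exists_mem_left_eq (hG : IsRegularSubgroup G) (a : A) : ∃ g ∈ G, g.left = a := by
  obtain ⟨⟨g, hg⟩, hga, -⟩ := hG 1 a
  exact ⟨g, hg, by simpa [holSmul] using hga⟩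

end IsRegularSubgroup

theorem Hol.toAdd_pow_left {n : ℕ} (g : Hol (Multiplicative (ZMod n))) (k : ℕ) :
    toAdd (g ^ k).left =
      toAdd g.left * ∑ i ∈ range k, (ZMod.mulAutEquivUnits n g.right : ZMod n) ^ i := by
  simp [SemidirectProduct.pow_left, toAdd_prod, ZMod.toAdd_mulAut_apply, mul_sum, mul_comm]

/-- Let `p` be an odd prime and `q` a prime with `q ≡ 1 (mod p)` but `q ≢ 1 (mod p²)`,
and let `A` be the cyclic group of order `p²q`.  Then there is no regular subgroup
`G ≤ Hol(A)` whose image under `π₂ : Hol(A) → Aut(A)` has order `p²`. -/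
theorem stmt_14 (p q : ℕ) (hp : p.Prime) (hpodd : Odd p) (hq : q.Prime)
    (hmod : q ≡ 1 [MOD p]) (hmod2 : ¬ q ≡ 1 [MOD p ^ 2]) :
    ¬ ∃ G : Subgroup (Hol (Multiplicative (ZMod (p ^ 2 * q)))),
        IsRegularSubgroup G ∧
        Nat.card (G.map SemidirectProduct.rightHom) = p ^ 2 := by
  rintro ⟨G, hreg, hcard⟩
  have : Fact p.Prime := ⟨hp⟩
  have hpq : ¬ p ∣ q := fun h => hp.one_lt.ne' <| Nat.dvd_one.1 <|
    Nat.sub_sub_self hq.one_le ▸ Nat.dvd_sub h ((Nat.modEq_iff_dvd' hq.one_le).1 hmod.symm)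
  have hq1 : ¬ p ^ 2 ∣ q - 1 := fun h => hmod2 ((Nat.modEq_iff_dvd' hq.one_le).2 h).symm
  obtain ⟨g, hgG, hg⟩ := hreg.exists_mem_left_eq (ofAdd 1)
  set u := ZMod.mulAutEquivUnits _ g.right
  have hf : g.right ^ p ^ 2 = 1 := orderOf_dvd_iff_pow_eq_one.1 <|
    (Subgroup.orderOf_dvd_natCard _ (G.mem_map_of_mem _ hgG)).trans hcard.dvd
  have hup : u ^ p = 1 := by
    refine ZMod.units_pow_eq_one_of_pow_sq_eq_one hp hq (fun h => hpq (h ▸ dvd_rfl)) hq1 ?_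
    rw [← map_pow, hf, map_one]
  have hright : (g ^ p).right = 1 := by
    rw [SemidirectProduct.pow_right, ← (ZMod.mulAutEquivUnits _).map_eq_one_iff, map_pow, hup]
  have hgpq : (g ^ p) ^ q = 1 := by
    have := G.pow_card_div_card_map_eq_one SemidirectProduct.rightHom (pow_mem hgG p) hright
    rwa [hcard, hreg.natCard_eq, Nat.card_congr toAdd, Nat.card_zmod,
      Nat.mul_div_cancel_left q (pow_pos hp.pos 2)] at this
  refine hpq (ZMod.dvd_of_geom_sum_mul_eq_zero hpodd (u := u) ?_ ?_)
  · rw [← Units.val_pow_eq_pow_val, hup, Units.val_one]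
  · simpa [Hol.toAdd_pow_left, hright, hg] using congrArg (toAdd ∘ SemidirectProduct.left) hgpq
end
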